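/- Let F : ℝᵃ × ℝᵃ × ℝᵇ → ℝ and G : ℝᵃ × ℝᵃ → ℝ be differentiable with L_F- and L_G-Lipschitz continuous gradients respectively (with respect to the Euclidean norm on the product space), and let H₂ ∈ ℝ^{a×a}. Let p, p⁺, q⁻, q, q⁺ ∈ ℝᵃ and t⁻, t ∈ ℝᵇ, and define λ = −∇_q F(p, q, t⁻) − ∇_q G(p, q) − H₂(q − q⁻) and λ⁺ = −∇_q F(p⁺, q⁺, t) − ∇_q G(p⁺, q⁺) − H₂(q⁺ − q), where ∇_q denotes the partial gradient with respect to the second ℝᵃ-block. Then ‖λ⁺ − λ‖² ≤ 4(L_F² + L_G²)‖p⁺ − p‖² + 4L_F²‖t − t⁻‖² + 4(q⁺ − q)ᵀ((L_F² + L_G²)I + H₂ᵀH₂)(q⁺ − q) + 4(q − q⁻)ᵀ H₂ᵀH₂ (q − q⁻). -/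

import Mathlib

open Matrix RealInnerProductSpace

variable {a b : ℕ}

/-- The quadratic form `v ↦ vᵀMv` of a matrix `M`, evaluated on a Euclidean vector. -/
noncomputable def quadForm (M : Matrix (Fin a) (Fin a) ℝ) (v : EuclideanSpace ℝ (Fin a)) : ℝ :=
  (fun i => v i) ⬝ᵥ (M *ᵥ fun i => v i)

/-- Matrix–vector multiplication acting on Euclidean vectors. -/
noncomputable def matVec (M : Matrix (Fin a) (Fin a) ℝ) (v : EuclideanSpace ℝ (Fin a)) :
    EuclideanSpace ℝ (Fin a) :=
  (WithLp.equiv 2 (Fin a → ℝ)).symm (M *ᵥ (WithLp.equiv 2 (Fin a → ℝ) v))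

/-- Partial gradient `∇_p F(p,q,t)` with respect to the first block. -/
noncomputable def gradP (F : EuclideanSpace ℝ (Fin a) → EuclideanSpace ℝ (Fin a) →
    EuclideanSpace ℝ (Fin b) → ℝ) (p q : EuclideanSpace ℝ (Fin a))
    (t : EuclideanSpace ℝ (Fin b)) : EuclideanSpace ℝ (Fin a) :=
  gradient (fun p' => F p' q t) p

/-- Partial gradient `∇_q F(p,q,t)` with respect to the second block. -/
noncomputable def gradQ (F : EuclideanSpace ℝ (Fin a) → EuclideanSpace ℝ (Fin a) →
    EuclideanSpace ℝ (Fin b) → ℝ) (p q : EuclideanSpace ℝ (Fin a))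
    (t : EuclideanSpace ℝ (Fin b)) : EuclideanSpace ℝ (Fin a) :=
  gradient (fun q' => F p q' t) q

/-- Partial gradient `∇_t F(p,q,t)` with respect to the third block. -/
noncomputable def gradT (F : EuclideanSpace ℝ (Fin a) → EuclideanSpace ℝ (Fin a) →
    EuclideanSpace ℝ (Fin b) → ℝ) (p q : EuclideanSpace ℝ (Fin a))
    (t : EuclideanSpace ℝ (Fin b)) : EuclideanSpace ℝ (Fin b) :=
  gradient (fun t' => F p q t') t

/-- Partial gradient `∇_p G(p,q)` with respect to the first block. -/
noncomputable def gradPG (G : EuclideanSpace ℝ (Fin a) → EuclideanSpace ℝ (Fin a) → ℝ)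
    (p q : EuclideanSpace ℝ (Fin a)) : EuclideanSpace ℝ (Fin a) :=
  gradient (fun p' => G p' q) p

/-- Partial gradient `∇_q G(p,q)` with respect to the second block. -/
noncomputable def gradQG (G : EuclideanSpace ℝ (Fin a) → EuclideanSpace ℝ (Fin a) → ℝ)
    (p q : EuclideanSpace ℝ (Fin a)) : EuclideanSpace ℝ (Fin a) :=
  gradient (fun q' => G p q') q

/-! The dual residual splits into the change of `∇_q F`, the change of `∇_q G` and two
proximal terms; `(x₁ + ⋯ + x₄)² ≤ 4 ∑ xᵢ²` reduces the claim to bounding each piece. The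
gradient pieces are controlled by the Lipschitz hypotheses, which bound every block of the
full gradient, and the proximal pieces satisfy `‖H₂ v‖² = vᵀ H₂ᵀ H₂ v`. -/

lemma norm_add_add_add_sq_le {E : Type*} [SeminormedAddCommGroup E] (x y z w : E) :
    ‖x + y + z + w‖ ^ 2 ≤ 4 * (‖x‖ ^ 2 + ‖y‖ ^ 2 + ‖z‖ ^ 2 + ‖w‖ ^ 2) := by
  have htri : ‖x + y + z + w‖ ≤ ‖x‖ + ‖y‖ + ‖z‖ + ‖w‖ := norm_add₄_le
  calc ‖x + y + z + w‖ ^ 2 ≤ (‖x‖ + ‖y‖ + ‖z‖ + ‖w‖) ^ 2 := by gcongr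
    _ ≤ 4 * (‖x‖ ^ 2 + ‖y‖ ^ 2 + ‖z‖ ^ 2 + ‖w‖ ^ 2) := by
      nlinarith [sq_nonneg (‖x‖ - ‖y‖), sq_nonneg (‖x‖ - ‖z‖), sq_nonneg (‖x‖ - ‖w‖),
        sq_nonneg (‖y‖ - ‖z‖), sq_nonneg (‖y‖ - ‖w‖), sq_nonneg (‖z‖ - ‖w‖)]

lemma le_sq_mul_of_sqrt_le_mul_sqrt {s d L : ℝ} (hs : 0 ≤ s) (hd : 0 ≤ d)
    (h : √s ≤ L * √d) : s ≤ L ^ 2 * d := by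
  have := pow_le_pow_left₀ (Real.sqrt_nonneg s) h 2
  rwa [Real.sq_sqrt hs, mul_pow, Real.sq_sqrt hd] at this

lemma norm_gradQ_sub_sq_le {F : EuclideanSpace ℝ (Fin a) → EuclideanSpace ℝ (Fin a) →
      EuclideanSpace ℝ (Fin b) → ℝ} {L : ℝ}
    (hF : ∀ (p q p' q' : EuclideanSpace ℝ (Fin a)) (t t' : EuclideanSpace ℝ (Fin b)),
      √(‖gradP F p q t - gradP F p' q' t'‖ ^ 2 + ‖gradQ F p q t - gradQ F p' q' t'‖ ^ 2
          + ‖gradT F p q t - gradT F p' q' t'‖ ^ 2)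
        ≤ L * √(‖p - p'‖ ^ 2 + ‖q - q'‖ ^ 2 + ‖t - t'‖ ^ 2))
    (p q p' q' : EuclideanSpace ℝ (Fin a)) (t t' : EuclideanSpace ℝ (Fin b)) :
    ‖gradQ F p q t - gradQ F p' q' t'‖ ^ 2
      ≤ L ^ 2 * (‖p - p'‖ ^ 2 + ‖q - q'‖ ^ 2 + ‖t - t'‖ ^ 2) := by
  have := le_sq_mul_of_sqrt_le_mul_sqrt (by positivity) (by positivity) (hF p q p' q' t t')
  nlinarith [sq_nonneg ‖gradP F p q t - gradP F p' q' t'‖,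
    sq_nonneg ‖gradT F p q t - gradT F p' q' t'‖]

lemma norm_gradQG_sub_sq_le {G : EuclideanSpace ℝ (Fin a) → EuclideanSpace ℝ (Fin a) → ℝ}
    {L : ℝ}
    (hG : ∀ p q p' q' : EuclideanSpace ℝ (Fin a),
      √(‖gradPG G p q - gradPG G p' q'‖ ^ 2 + ‖gradQG G p q - gradQG G p' q'‖ ^ 2)
        ≤ L * √(‖p - p'‖ ^ 2 + ‖q - q'‖ ^ 2))
    (p q p' q' : EuclideanSpace ℝ (Fin a)) :
    ‖gradQG G p q - gradQG G p' q'‖ ^ 2 ≤ L ^ 2 * (‖p - p'‖ ^ 2 + ‖q - q'‖ ^ 2) := by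
  have := le_sq_mul_of_sqrt_le_mul_sqrt (by positivity) (by positivity) (hG p q p' q')
  nlinarith [sq_nonneg ‖gradPG G p q - gradPG G p' q'‖]

lemma EuclideanSpace.norm_sq_eq_dotProduct (v : EuclideanSpace ℝ (Fin a)) :
    ‖v‖ ^ 2 = v.ofLp ⬝ᵥ v.ofLp := by
  rw [← real_inner_self_eq_norm_sq, EuclideanSpace.inner_eq_star_dotProduct, star_trivial]

lemma norm_matVec_sq (M : Matrix (Fin a) (Fin a) ℝ) (v : EuclideanSpace ℝ (Fin a)) :
    ‖matVec M v‖ ^ 2 = quadForm (Mᵀ * M) v := by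
  rw [EuclideanSpace.norm_sq_eq_dotProduct, quadForm, ← Matrix.mulVec_mulVec,
    Matrix.dotProduct_mulVec, Matrix.vecMul_transpose]
  rfl

lemma quadForm_smul_one_add (c : ℝ) (M : Matrix (Fin a) (Fin a) ℝ)
    (v : EuclideanSpace ℝ (Fin a)) :
    quadForm (c • (1 : Matrix (Fin a) (Fin a) ℝ) + M) v = c * ‖v‖ ^ 2 + quadForm M v := by
  rw [EuclideanSpace.norm_sq_eq_dotProduct, quadForm, quadForm, Matrix.add_mulVec,
    dotProduct_add, Matrix.smul_mulVec, Matrix.one_mulVec, dotProduct_smul, smul_eq_mul]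

theorem stmt12_general
    (F : EuclideanSpace ℝ (Fin a) → EuclideanSpace ℝ (Fin a) → EuclideanSpace ℝ (Fin b) → ℝ)
    (G : EuclideanSpace ℝ (Fin a) → EuclideanSpace ℝ (Fin a) → ℝ) (LF LG : ℝ)
    (hFlip : ∀ (p q p' q' : EuclideanSpace ℝ (Fin a)) (t t' : EuclideanSpace ℝ (Fin b)),
      Real.sqrt (‖gradP F p q t - gradP F p' q' t'‖ ^ 2 + ‖gradQ F p q t - gradQ F p' q' t'‖ ^ 2
          + ‖gradT F p q t - gradT F p' q' t'‖ ^ 2)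
        ≤ LF * Real.sqrt (‖p - p'‖ ^ 2 + ‖q - q'‖ ^ 2 + ‖t - t'‖ ^ 2))
    (hGlip : ∀ p q p' q' : EuclideanSpace ℝ (Fin a),
      Real.sqrt (‖gradPG G p q - gradPG G p' q'‖ ^ 2 + ‖gradQG G p q - gradQG G p' q'‖ ^ 2)
        ≤ LG * Real.sqrt (‖p - p'‖ ^ 2 + ‖q - q'‖ ^ 2))
    (H2 : Matrix (Fin a) (Fin a) ℝ)
    (p pp qm q qp : EuclideanSpace ℝ (Fin a)) (tm t : EuclideanSpace ℝ (Fin b))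
    (lam lamp : EuclideanSpace ℝ (Fin a))
    (hlam : lam = -gradQ F p q tm - gradQG G p q - matVec H2 (q - qm))
    (hlamp : lamp = -gradQ F pp qp t - gradQG G pp qp - matVec H2 (qp - q)) :
    ‖lamp - lam‖ ^ 2
      ≤ 4 * (LF ^ 2 + LG ^ 2) * ‖pp - p‖ ^ 2 + 4 * LF ^ 2 * ‖t - tm‖ ^ 2
        + 4 * quadForm ((LF ^ 2 + LG ^ 2) • (1 : Matrix (Fin a) (Fin a) ℝ) + H2ᵀ * H2) (qp - q)
        + 4 * quadForm (H2ᵀ * H2) (q - qm) := by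
  have hsplit : lamp - lam = -(gradQ F pp qp t - gradQ F p q tm)
      + -(gradQG G pp qp - gradQG G p q) + -matVec H2 (qp - q) + matVec H2 (q - qm) := by
    rw [hlam, hlamp]
    abel
  have hsq := norm_add_add_add_sq_le (-(gradQ F pp qp t - gradQ F p q tm))
    (-(gradQG G pp qp - gradQG G p q)) (-matVec H2 (qp - q)) (matVec H2 (q - qm))
  rw [← hsplit, norm_neg, norm_neg, norm_neg, norm_matVec_sq, norm_matVec_sq] at hsq
  have hFq := norm_gradQ_sub_sq_le hFlip pp qp p q t tm
  have hGq := norm_gradQG_sub_sq_le hGlip pp qp p q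
  rw [quadForm_smul_one_add]
  linarith

/-- Lemma 5.1 of the paper: bound on the iterative residual of the dual variable of
PieADMM in terms of the primal residuals.  `F` and `G` are differentiable with `L_F`-
resp. `L_G`-Lipschitz gradients with respect to the Euclidean norm of the product space
(the gradient of `F` is the triple of partial gradients, that of `G` the pair). -/
theorem stmt12
    (F : EuclideanSpace ℝ (Fin a) → EuclideanSpace ℝ (Fin a) → EuclideanSpace ℝ (Fin b) → ℝ)
    (G : EuclideanSpace ℝ (Fin a) → EuclideanSpace ℝ (Fin a) → ℝ) (LF LG : ℝ)
    (hFdiff : Differentiable ℝ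
      (fun x : EuclideanSpace ℝ (Fin a) × EuclideanSpace ℝ (Fin a) × EuclideanSpace ℝ (Fin b) =>
        F x.1 x.2.1 x.2.2))
    (hGdiff : Differentiable ℝ
      (fun x : EuclideanSpace ℝ (Fin a) × EuclideanSpace ℝ (Fin a) => G x.1 x.2))
    (hFlip : ∀ (p q p' q' : EuclideanSpace ℝ (Fin a)) (t t' : EuclideanSpace ℝ (Fin b)),
      Real.sqrt (‖gradP F p q t - gradP F p' q' t'‖ ^ 2 + ‖gradQ F p q t - gradQ F p' q' t'‖ ^ 2
          + ‖gradT F p q t - gradT F p' q' t'‖ ^ 2)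
        ≤ LF * Real.sqrt (‖p - p'‖ ^ 2 + ‖q - q'‖ ^ 2 + ‖t - t'‖ ^ 2))
    (hGlip : ∀ p q p' q' : EuclideanSpace ℝ (Fin a),
      Real.sqrt (‖gradPG G p q - gradPG G p' q'‖ ^ 2 + ‖gradQG G p q - gradQG G p' q'‖ ^ 2)
        ≤ LG * Real.sqrt (‖p - p'‖ ^ 2 + ‖q - q'‖ ^ 2))
    (H2 : Matrix (Fin a) (Fin a) ℝ)
    (p pp qm q qp : EuclideanSpace ℝ (Fin a)) (tm t : EuclideanSpace ℝ (Fin b))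
    (lam lamp : EuclideanSpace ℝ (Fin a))
    (hlam : lam = -gradQ F p q tm - gradQG G p q - matVec H2 (q - qm))
    (hlamp : lamp = -gradQ F pp qp t - gradQG G pp qp - matVec H2 (qp - q)) :
    ‖lamp - lam‖ ^ 2
      ≤ 4 * (LF ^ 2 + LG ^ 2) * ‖pp - p‖ ^ 2 + 4 * LF ^ 2 * ‖t - tm‖ ^ 2
        + 4 * quadForm ((LF ^ 2 + LG ^ 2) • (1 : Matrix (Fin a) (Fin a) ℝ) + H2ᵀ * H2) (qp - q)
        + 4 * quadForm (H2ᵀ * H2) (q - qm) :=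
  stmt12_general F G LF LG hFlip hGlip H2 p pp qm q qp tm t lam lamp hlam hlamp
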